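/- If τ is a permutation such that P(τ) contains no 123-chain, then P(τ) has a linear extension that avoids the pattern 123. -/

import Mathlib

/-- A permutation of length `n` (a bijection of `{0, …, n-1}`, identified with the
sequence of its values), packaged with its length. -/
abbrev PermSig : Type := Σ n : ℕ, Equiv.Perm (Fin n)

/-- Pattern containment: the permutation `α` of length `k` is contained in the
permutation `τ` of length `n` if there is an increasing choice of positions on which
`τ` is order-isomorphic to `α`. -/
def Contains {k n : ℕ} (α : Equiv.Perm (Fin k)) (τ : Equiv.Perm (Fin n)) : Prop :=
  ∃ f : Fin k ↪o Fin n, ∀ i j : Fin k, α i < α j ↔ τ (f i) < τ (f j)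

/-- The avoidance class `Av B`: all permutations containing no member of `B`. -/
def Av (B : Set PermSig) : Set PermSig :=
  {τ : PermSig | ∀ β ∈ B, ¬ Contains β.2 τ.2}

/-- A pattern class: a set of permutations downward closed under pattern containment. -/
def IsPatternClass (C : Set PermSig) : Prop :=
  ∀ (k n : ℕ) (α : Equiv.Perm (Fin k)) (τ : Equiv.Perm (Fin n)),
    Contains α τ → (⟨n, τ⟩ : PermSig) ∈ C → (⟨k, α⟩ : PermSig) ∈ C

/-- The base relation of the poset `P(τ)` on values: `x ≺ y` whenever `x` appears
before `y` in `τ` and either `x > y`, or some value `z` appears between `x` and `y`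
in `τ` with `x < y < z`. -/
def PQBase {n : ℕ} (τ : Equiv.Perm (Fin n)) (x y : Fin n) : Prop :=
  τ.symm x < τ.symm y ∧
    (y < x ∨ ∃ z : Fin n, τ.symm x < τ.symm z ∧ τ.symm z < τ.symm y ∧ x < y ∧ y < z)

/-- The poset `P(τ)`: the transitive closure of the base relation. -/
def PQ {n : ℕ} (τ : Equiv.Perm (Fin n)) : Fin n → Fin n → Prop :=
  Relation.TransGen (PQBase τ)

/-- `σ` is a linear extension of `P(τ)`; equivalently, `(σ, τ)` is an allowable pair,
i.e. a priority queue can produce output `τ` from input `σ`. -/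
def Allowable {n : ℕ} (σ τ : Equiv.Perm (Fin n)) : Prop :=
  ∀ x y : Fin n, PQ τ x y → σ.symm x < σ.symm y

/-- `C𝒜`: the set of permutations obtainable by a priority queue from an input in `C`. -/
def ImageA (C : Set PermSig) : Set PermSig :=
  {τ : PermSig | ∃ σ : Equiv.Perm (Fin τ.1), (⟨τ.1, σ⟩ : PermSig) ∈ C ∧ Allowable σ τ.2}

/-- `P(τ)` has an `α`-chain: values `a 0 ≺ a 1 ≺ … ≺ a (k-1)` forming a chain of
`P(τ)` whose pattern is `α`. -/
def HasChain {k n : ℕ} (α : Equiv.Perm (Fin k)) (τ : Equiv.Perm (Fin n)) : Prop :=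
  ∃ a : Fin k → Fin n,
    (∀ i j : Fin k, i < j → PQ τ (a i) (a j)) ∧
    (∀ i j : Fin k, a i < a j ↔ α i < α j)

/-- The pattern `123` (written 0-indexed). -/
noncomputable def p123 : Equiv.Perm (Fin 3) :=
  Equiv.ofBijective (![0, 1, 2] : Fin 3 → Fin 3) (by decide)

/-!
In the value order, `P(τ)` splits intervals: if `x ≺ y` and `x < z < y`, then `x ≺ z` or
`z ≺ y`. This is exactly what makes it consistent to extend `P(τ)` to a total order by putting
incomparable values in decreasing order. In the resulting linear extension every ascent is a
relation of `P(τ)`, so an occurrence of `123` in it is a `123`-chain of `P(τ)`.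
-/

open Finset

section DescCompletion

variable {α : Type*} [LinearOrder α] (r : α → α → Prop)

def descCompletion (x y : α) : Prop := r x y ∨ (¬ r y x ∧ y < x)

variable {r}

theorem descCompletion_of_lt {x y : α} (h : descCompletion r x y) (hxy : x < y) : r x y :=
  h.resolve_right fun h' => lt_asymm hxy h'.2

theorem descCompletion_asymm [Std.Asymm r] {x y : α} (hxy : descCompletion r x y) :
    ¬ descCompletion r y x := by
  rintro (hyx | ⟨hnxy, hxy'⟩) <;> rcases hxy with hxy | ⟨hnyx, hyx'⟩
  exacts [asymm hxy hyx, hnyx hyx, hnxy hxy, lt_asymm hxy' hyx']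

theorem descCompletion_trans [IsStrictOrder α r]
    (hr : ∀ ⦃x y z⦄, r x y → x < z → z < y → r x z ∨ r z y) {x y z : α}
    (hxy : descCompletion r x y) (hyz : descCompletion r y z) : descCompletion r x z := by
  by_cases hxz : r x z
  · exact Or.inl hxz
  refine Or.inr ⟨fun hzx => ?_, lt_of_not_ge fun hxz' => ?_⟩
  · rcases hxy with hxy | ⟨hnyx, hyx⟩ <;> rcases hyz with hyz | ⟨hnzy, hzy⟩
    · exact irrefl x (_root_.trans (_root_.trans hxy hyz) hzx)
    · exact hnzy (_root_.trans hzx hxy)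
    · exact hnyx (_root_.trans hyz hzx)
    · exact (hr hzx hzy hyx).elim hnzy hnyx
  rcases hxz'.eq_or_lt with rfl | hxz'
  · exact descCompletion_asymm hxy hyz
  rcases hxy with hxy | ⟨hnyx, hyx⟩ <;> rcases hyz with hyz | ⟨hnzy, hzy⟩
  · exact hxz (_root_.trans hxy hyz)
  · exact (hr hxy hxz' hzy).elim hxz hnzy
  · exact (hr hyz hyx hxz').elim hnyx hxz
  · exact lt_asymm hxz' (hzy.trans hyx)

theorem isStrictTotalOrder_descCompletion [IsStrictOrder α r]
    (hr : ∀ ⦃x y z⦄, r x y → x < z → z < y → r x z ∨ r z y) :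
    IsStrictTotalOrder α (descCompletion r) where
  trichotomous a b hab hba := by
    simp only [descCompletion, not_or, not_and, not_lt] at hab hba
    exact le_antisymm (hab.2 hba.1) (hba.2 hab.1)
  irrefl _ h := descCompletion_asymm h h
  trans _ _ _ := descCompletion_trans hr

end DescCompletion

theorem exists_perm_symm_lt_iff {n : ℕ} (r : Fin n → Fin n → Prop) [IsStrictTotalOrder (Fin n) r] :
    ∃ σ : Equiv.Perm (Fin n), ∀ x y, σ.symm x < σ.symm y ↔ r x y := by
  classical
  let rank (x : Fin n) : Fin n :=
    ⟨#{y | r y x}, by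
      simpa using card_lt_card (filter_ssubset (p := (r · x)).2 ⟨x, mem_univ x, irrefl_of r x⟩)⟩
  have rank_lt {x y : Fin n} (hxy : r x y) : rank x < rank y := by
    refine Fin.mk_lt_mk.2 <| card_lt_card ((ssubset_iff_of_subset fun w hw => ?_).2 ⟨x, ?_, ?_⟩) <;>
      simp_all only [mem_filter, mem_univ, true_and, irrefl, not_false_eq_true]
    exact _root_.trans hw hxy
  have rank_lt_iff (x y : Fin n) : rank x < rank y ↔ r x y := by
    refine ⟨fun h => ?_, rank_lt⟩
    rcases trichotomous_of r x y with hxy | rfl | hyx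
    exacts [hxy, absurd h (lt_irrefl _), absurd h (rank_lt hyx).asymm]
  have rank_injective : Function.Injective rank := fun x y h => by
    by_contra hne
    rcases trichotomous_of r x y with hxy | rfl | hyx
    exacts [(rank_lt hxy).ne h, hne rfl, (rank_lt hyx).ne' h]
  refine ⟨(Equiv.ofBijective rank (Finite.injective_iff_bijective.1 rank_injective)).symm, ?_⟩
  simpa using rank_lt_iff

section PQ

variable {n : ℕ} {τ : Equiv.Perm (Fin n)} {x y z : Fin n}

theorem PQ.symm_lt (h : PQ τ x y) : τ.symm x < τ.symm y := by
  induction h with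
  | single h => exact h.1
  | tail _ h ih => exact ih.trans h.1

instance : IsStrictOrder (Fin n) (PQ τ) where
  irrefl _ h := lt_irrefl _ h.symm_lt
  trans _ _ _ := Relation.TransGen.trans

theorem PQBase.or_of_lt_of_lt (h : PQBase τ x y) (hxz : x < z) (hzy : z < y) :
    PQBase τ x z ∨ PQBase τ z y := by
  obtain ⟨-, hyx | ⟨w, hxw, hwy, -, hyw⟩⟩ := h
  · exact absurd (hxz.trans hzy) hyx.not_gt
  -- the witness `w > y` of `x ≺ y` also witnesses `x ≺ z` or `z ≺ y`, depending on where `z` sits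
  rcases lt_or_gt_of_ne (τ.symm.injective.ne (hzy.trans hyw).ne) with hzw | hwz
  · exact Or.inr ⟨hzw.trans hwy, Or.inr ⟨w, hzw, hwy, hzy, hyw⟩⟩
  · exact Or.inl ⟨hxw.trans hwz, Or.inr ⟨w, hxw, hwz, hxz, hzy.trans hyw⟩⟩

theorem PQ.or_of_lt_of_lt (h : PQ τ x y) (hxz : x < z) (hzy : z < y) :
    PQ τ x z ∨ PQ τ z y := by
  induction h generalizing z with
  | single h => exact (h.or_of_lt_of_lt hxz hzy).imp .single .single
  | @tail m y hxm hmy ih =>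
    rcases lt_trichotomy z m with hzm | rfl | hmz
    · exact (ih hxz hzm).imp_right (·.tail hmy)
    · exact Or.inl hxm
    · exact (hmy.or_of_lt_of_lt hmz hzy).imp hxm.tail .single

end PQ

theorem p123_eq_one : p123 = 1 := by
  ext i
  fin_cases i <;> rfl

theorem hasChain_one_of_contains_one {k n : ℕ} {σ τ : Equiv.Perm (Fin n)}
    (hσ : ∀ x y, σ.symm x < σ.symm y → x < y → PQ τ x y)
    (h : Contains (1 : Equiv.Perm (Fin k)) σ) : HasChain (1 : Equiv.Perm (Fin k)) τ := by
  obtain ⟨f, hf⟩ := h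
  have hmono : StrictMono (σ ∘ f) := fun i j hij => (hf i j).1 hij
  refine ⟨σ ∘ f, fun i j hij => hσ _ _ ?_ (hmono hij), fun i j => hmono.lt_iff_lt⟩
  simpa using f.strictMono hij

/-- If `P(τ)` contains no `123`-chain then it has a `123`-avoiding linear
extension. -/
theorem no_chain_123_linear_extension {n : ℕ} (τ : Equiv.Perm (Fin n)) (h : ¬ HasChain p123 τ) :
    ∃ σ : Equiv.Perm (Fin n), Allowable σ τ ∧ ¬ Contains p123 σ := by
  have := isStrictTotalOrder_descCompletion (r := PQ τ) fun _ _ _ => PQ.or_of_lt_of_lt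
  obtain ⟨σ, hσ⟩ := exists_perm_symm_lt_iff (descCompletion (PQ τ))
  refine ⟨σ, fun x y hxy => (hσ x y).2 (Or.inl hxy), fun hc => h ?_⟩
  rw [p123_eq_one] at hc ⊢
  exact hasChain_one_of_contains_one
    (fun x y hσxy hxy => descCompletion_of_lt ((hσ x y).1 hσxy) hxy) hc
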